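/- The function N ↦ (1/N)·(r^(N/2) - 1)·log(r^N/(r^N - 1)) is decreasing for real N ≥ 2, for every fixed real r ≥ 2. -/

import Mathlib

/-!
Substituting `x = r ^ (N / 2)`, so that `r ^ N = x ^ 2`, the function becomes `g x / N` with
`g x = (x - 1) * log (x ^ 2 / (x ^ 2 - 1)) ≥ 0`. By `log y ≤ y - 1`,
`g' x = log (x ^ 2 / (x ^ 2 - 1)) - 2 / (x (x + 1)) ≤ 1 / (x ^ 2 - 1) - 2 / (x (x + 1))`,
which is `≤ 0` exactly when `(x - 2) (x + 1) ≥ 0`. So `g` decreases on `[2, ∞)`, where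
`r ^ (N / 2)` lives and increases with `N`, and dividing by the increasing `N > 0` keeps
the quotient decreasing.
-/

open Real Set

lemma AntitoneOn.div_of_nonneg_of_monotoneOn {s : Set ℝ} {f g : ℝ → ℝ} (hf : AntitoneOn f s)
    (hf₀ : ∀ x ∈ s, 0 ≤ f x) (hg : MonotoneOn g s) (hg₀ : ∀ x ∈ s, 0 < g x) :
    AntitoneOn (fun x => f x / g x) s :=
  fun _ ha _ hb hab => div_le_div₀ (hf₀ _ ha) (hf ha hb hab) (hg₀ _ ha) (hg ha hb hab)

lemma log_sq_div_sq_sub_one_nonneg {x : ℝ} (hx : 1 < x) : 0 ≤ log (x ^ 2 / (x ^ 2 - 1)) :=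
  log_nonneg <| (one_le_div (by nlinarith)).mpr (by linarith)

lemma log_sq_div_sq_sub_one_le {x : ℝ} (hx : 1 < x) :
    log (x ^ 2 / (x ^ 2 - 1)) ≤ 1 / (x ^ 2 - 1) := by
  have hx₁ : 0 < x ^ 2 - 1 := by nlinarith
  calc log (x ^ 2 / (x ^ 2 - 1)) ≤ x ^ 2 / (x ^ 2 - 1) - 1 := log_le_sub_one_of_pos (by positivity)
    _ = 1 / (x ^ 2 - 1) := by field_simp; ring

lemma hasDerivAt_log_sq_div_sq_sub_one {x : ℝ} (hx : 1 < x) :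
    HasDerivAt (fun x => log (x ^ 2 / (x ^ 2 - 1))) (-(2 / (x * (x ^ 2 - 1)))) x := by
  have hx₁ : 0 < x ^ 2 - 1 := by nlinarith
  have hsq : HasDerivAt (fun x : ℝ => x ^ 2) (2 * x) x := by simpa using hasDerivAt_pow 2 x
  have hdiv : HasDerivAt (fun x => x ^ 2 / (x ^ 2 - 1))
      ((2 * x * (x ^ 2 - 1) - x ^ 2 * (2 * x)) / (x ^ 2 - 1) ^ 2) x :=
    hsq.div (hsq.sub_const 1) hx₁.ne'
  convert hdiv.log (by positivity) using 1
  field_simp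
  ring

lemma antitoneOn_sub_one_mul_log_sq_div_sq_sub_one :
    AntitoneOn (fun x => (x - 1) * log (x ^ 2 / (x ^ 2 - 1))) (Ici 2) := by
  have hderiv : ∀ x : ℝ, 1 < x → HasDerivAt (fun x => (x - 1) * log (x ^ 2 / (x ^ 2 - 1)))
      (log (x ^ 2 / (x ^ 2 - 1)) - 2 / (x * (x + 1))) x := fun x hx => by
    have hlin : HasDerivAt (fun x : ℝ => x - 1) 1 x := (hasDerivAt_id x).sub_const 1
    refine (hlin.mul (hasDerivAt_log_sq_div_sq_sub_one hx)).congr_deriv ?_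
    have : x ^ 2 - 1 ≠ 0 := by nlinarith
    field_simp
    ring
  refine antitoneOn_of_hasDerivWithinAt_nonpos (convex_Ici 2)
    (fun x hx => (hderiv x (by linarith [mem_Ici.mp hx])).continuousAt.continuousWithinAt)
    (fun x hx => (hderiv x (by rw [interior_Ici] at hx; linarith [mem_Ioi.mp hx])).hasDerivWithinAt)
    fun x hx => ?_
  have hx : 2 < x := by simpa using hx
  have hx₁ : 0 < x ^ 2 - 1 := by nlinarith
  have hbound : 1 / (x ^ 2 - 1) ≤ 2 / (x * (x + 1)) := by
    rw [div_le_div_iff₀ hx₁ (by positivity)]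
    nlinarith
  linarith [log_sq_div_sq_sub_one_le (by linarith : 1 < x)]

/-- For fixed `r ≥ 2`, the function `N ↦ (1/N)(r^(N/2)-1) log(r^N/(r^N-1))`
is decreasing on `[2, ∞)`. -/
theorem stmt7 (r : ℝ) (hr : 2 ≤ r) :
    AntitoneOn (fun N : ℝ => (r ^ (N / 2) - 1) * Real.log (r ^ N / (r ^ N - 1)) / N)
      (Set.Ici (2 : ℝ)) := by
  have hsq : ∀ N : ℝ, r ^ N = (r ^ (N / 2)) ^ 2 := fun N => by
    rw [← rpow_natCast, ← rpow_mul (by linarith)]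
    norm_num
  have hmono : MonotoneOn (fun N : ℝ => r ^ (N / 2)) (Ici 2) := fun a _ b _ hab =>
    rpow_le_rpow_of_exponent_le (by linarith) (by linarith)
  have hmaps : MapsTo (fun N : ℝ => r ^ (N / 2)) (Ici 2) (Ici 2) := fun N hN =>
    calc 2 ≤ r ^ (1 : ℝ) := by rwa [rpow_one]
      _ ≤ r ^ (N / 2) := rpow_le_rpow_of_exponent_le (by linarith) (by linarith [mem_Ici.mp hN])
  have hnum := antitoneOn_sub_one_mul_log_sq_div_sq_sub_one.comp_MonotoneOn hmono hmaps
  refine (hnum.div_of_nonneg_of_monotoneOn (fun N hN => ?_) monotoneOn_id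
    fun N hN => two_pos.trans_le hN).congr fun N _ => by simp only [Function.comp, id, hsq N]
  have hx : 2 ≤ r ^ (N / 2) := hmaps hN
  exact mul_nonneg (by linarith) (log_sq_div_sq_sub_one_nonneg (by linarith))
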